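/- The clique number of G(ℚⁿ, q) equals 1 + max{k : Sₖ embeds into q}, where Sₖ embeds into q means there exists a rational quadratic form r on n−k variables with Sₖ(x) + r(y) rationally equivalent to q. -/

import Mathlib

/-- The unit-distance graph of a rational quadratic form `q` on `ℚⁿ`:
vertices are `ℚⁿ` and `x ~ y` iff `q (x - y) = 1`. -/
def distGraph {n : ℕ} (q : QuadraticForm ℚ (Fin n → ℚ)) : SimpleGraph (Fin n → ℚ) where
  Adj x y := q (x - y) = 1
  symm := ⟨fun x y h => by (try simp only [] at h ⊢); rwa [QuadraticMap.map_sub] at h⟩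
  loopless := ⟨fun x h => by simp [sub_self] at h⟩

/-- The quadratic form `Sₙ(x) = ∑_{1 ≤ i ≤ j ≤ n} xᵢ xⱼ` as a function. -/
def Sfun (n : ℕ) (x : Fin n → ℚ) : ℚ := ∑ i, ∑ j ∈ Finset.Ici i, x i * x j

/-- `Sₖ` embeds into `q`: there is a rational quadratic form `r` on `n - k` variables
with `Sₖ ⊕ r` rationally equivalent to `q`. -/
def SEmbeds {n : ℕ} (k : ℕ) (q : QuadraticForm ℚ (Fin n → ℚ)) : Prop :=
  ∃ (r : QuadraticForm ℚ (Fin (n - k) → ℚ))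
    (T : (Fin n → ℚ) ≃ₗ[ℚ] ((Fin k → ℚ) × (Fin (n - k) → ℚ))),
    ∀ v : Fin n → ℚ, q v = Sfun k (T v).1 + r (T v).2

/-!
Translate a clique of `G(ℚⁿ, q)` of size `m + 1` so that it contains `0`; its other vertices
`w₁, …, wₘ` satisfy `q wᵢ = 1` and `q (wᵢ - wⱼ) = 1`, so the polar form of `q` has Gram
matrix `(1 + δᵢⱼ)` on them, as does the polar form of `Sₘ` on the standard basis. Hence
`x ↦ ∑ xᵢ wᵢ` is an isometry from `Sₘ` into `q`; it is injective because `Sₘ` is positive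
definite, and since `q` is anisotropic its image has an orthogonal complement, giving
`q ≅ Sₘ ⊕ r`. Conversely, if `q ≅ Sₖ ⊕ r`, then `0` and the preimages of the standard basis
vectors `eᵢ` form a clique, because `Sₖ eᵢ = Sₖ (eᵢ - eⱼ) = 1`.
-/

open Finset

lemma two_mul_Sfun (n : ℕ) (x : Fin n → ℚ) :
    2 * Sfun n x = (∑ i, x i) ^ 2 + ∑ i, x i ^ 2 := by
  have hsym : Sfun n x = ∑ i, ∑ j ∈ Iic i, x i * x j := by
    rw [Sfun, sum_comm' (t' := univ) (s' := Iic) (by simp)]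
    simp_rw [mul_comm]
  have hsplit (i : Fin n) :
      ∑ j ∈ Ici i, x i * x j + ∑ j ∈ Iic i, x i * x j = ∑ j, x i * x j + x i ^ 2 := by
    have hunion : Ici i ∪ Iic i = univ := by ext j; simp [le_total]
    have hinter : Ici i ∩ Iic i = {i} := by ext j; simp [le_antisymm_iff, and_comm]
    rw [← sum_union_inter, hunion, hinter, sum_singleton, sq]
  calc 2 * Sfun n x = ∑ i, (∑ j ∈ Ici i, x i * x j + ∑ j ∈ Iic i, x i * x j) := by
        rw [sum_add_distrib, ← hsym, Sfun]; ring
    _ = (∑ i, x i) ^ 2 + ∑ i, x i ^ 2 := by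
        simp_rw [hsplit, sum_add_distrib, sq, sum_mul_sum]

lemma Sfun_pos {n : ℕ} {x : Fin n → ℚ} (hx : x ≠ 0) : 0 < Sfun n x := by
  obtain ⟨i, hi⟩ : ∃ i, x i ≠ 0 := Function.ne_iff.mp hx
  have : 0 < ∑ j, x j ^ 2 := sum_pos' (fun j _ => sq_nonneg _) ⟨i, mem_univ i, by positivity⟩
  nlinarith [two_mul_Sfun n x, sq_nonneg (∑ j, x j)]

lemma Sfun_single {k : ℕ} (i : Fin k) : Sfun k (Pi.single i 1) = 1 := by
  have h := two_mul_Sfun k (Pi.single i 1)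
  norm_num [Pi.single_apply] at h
  linarith

lemma Sfun_single_sub_single {k : ℕ} {i j : Fin k} (h : i ≠ j) :
    Sfun k (Pi.single i 1 - Pi.single j 1) = 1 := by
  have h2 := two_mul_Sfun k (Pi.single i 1 - Pi.single j 1)
  norm_num [Pi.single_apply, sum_sub_distrib, sub_sq, sum_add_distrib, ite_pow, mul_ite, h.symm] at h2
  linarith

section UnitSimplex

variable {R M : Type*} [CommRing R] [AddCommGroup M] [Module R M]

def IsUnitSimplex (q : QuadraticForm R M) {m : ℕ} (w : Fin m → M) : Prop :=
  (∀ i, q (w i) = 1) ∧ ∀ i j, i ≠ j → q (w i - w j) = 1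

open QuadraticMap in
lemma IsUnitSimplex.polar_eq {q : QuadraticForm R M} {m : ℕ} {w : Fin m → M}
    (hw : IsUnitSimplex q w) (i j : Fin m) : polar q (w i) (w j) = if i = j then 2 else 1 := by
  split_ifs with hij
  · rw [hij, polar_self, hw.1, nsmul_eq_mul, mul_one, Nat.cast_ofNat]
  · have h := polar_neg_right q (w i) (w j)
    rw [polar, ← sub_eq_add_neg, QuadraticMap.map_neg, hw.2 i j hij, hw.1, hw.1] at h
    linear_combination h

end UnitSimplex

open QuadraticMap in
lemma IsUnitSimplex.map_linearCombination {V : Type*} [AddCommGroup V] [Module ℚ V]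
    {q : QuadraticForm ℚ V} {m : ℕ} {w : Fin m → V} (hw : IsUnitSimplex q w) (x : Fin m → ℚ) :
    q (Fintype.linearCombination ℚ w x) = Sfun m x := by
  set v := Fintype.linearCombination ℚ w x
  have hsplit (i j : Fin m) :
      x i * (x j * if j = i then 2 else 1) = x i * x j + if j = i then x i * x j else 0 := by
    split_ifs <;> ring
  have : 2 * q v = 2 * Sfun m x := by
    calc 2 * q v = polarBilin q v v := by
          rw [polarBilin_apply_apply, polar_self, nsmul_eq_mul, Nat.cast_ofNat]
      _ = ∑ i, ∑ j, x i * (x j * if j = i then 2 else 1) := by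
          simp only [v, Fintype.linearCombination_apply, map_sum, map_smul, LinearMap.sum_apply,
            LinearMap.smul_apply, polarBilin_apply_apply, hw.polar_eq, smul_eq_mul, mul_sum]
      _ = (∑ i, x i) ^ 2 + ∑ i, x i ^ 2 := by
          simp_rw [hsplit, sum_add_distrib, sum_ite_eq', mem_univ, if_true, _root_.sq, sum_mul_sum]
      _ = 2 * Sfun m x := (two_mul_Sfun m x).symm
  linarith

open QuadraticMap LinearMap.BilinForm in
lemma QuadraticMap.Anisotropic.isCompl_orthogonal {K V : Type*} [Field K] [NeZero (2 : K)]
    [AddCommGroup V] [Module K V] [FiniteDimensional K V] {q : QuadraticForm K V}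
    (hq : q.Anisotropic) (W : Submodule K V) : IsCompl W (orthogonal (polarBilin q) W) := by
  have hrefl : (polarBilin q).IsRefl := fun x y h => by
    rwa [polarBilin_apply_apply, polar_comm, ← polarBilin_apply_apply]
  refine (isCompl_orthogonal_iff_disjoint hrefl).mpr (Submodule.disjoint_def.mpr fun v hW hWp => ?_)
  have h : polar q v v = 0 := hWp v hW
  rw [polar_self, two_nsmul, ← two_mul] at h
  exact hq v ((mul_eq_zero.mp h).resolve_left two_ne_zero)

open QuadraticMap Module in
lemma sEmbeds_of_isometry {n k : ℕ} {q : QuadraticForm ℚ (Fin n → ℚ)} (hq : q.Anisotropic)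
    (L : (Fin k → ℚ) →ₗ[ℚ] (Fin n → ℚ)) (hL : ∀ x, q (L x) = Sfun k x) : SEmbeds k q := by
  have hinj : Function.Injective L := by
    refine (injective_iff_map_eq_zero L).mpr fun x hx => ?_
    by_contra hne
    have := Sfun_pos hne
    rw [← hL, hx, map_zero] at this
    exact this.false
  set W := LinearMap.range L
  set Wp := LinearMap.BilinForm.orthogonal (polarBilin q) W
  have hc := hq.isCompl_orthogonal W
  set P := Submodule.prodEquivOfIsCompl W Wp hc
  have hfin : finrank ℚ Wp = finrank ℚ (Fin (n - k) → ℚ) := by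
    have := P.finrank_eq
    rw [finrank_prod, LinearMap.finrank_range_of_inj hinj] at this
    simp only [finrank_fin_fun] at this ⊢
    omega
  let E := LinearEquiv.ofFinrankEq _ _ hfin
  refine ⟨q.comp (Wp.subtype ∘ₗ E.symm.toLinearMap),
    P.symm ≪≫ₗ (LinearEquiv.ofInjective L hinj).symm.prodCongr E, fun v => ?_⟩
  obtain ⟨⟨a, b⟩, rfl⟩ := P.surjective v
  have hab : q (a + b) = q a + q b := isOrtho_polarBilin.mp (b.2 a a.2)
  simpa [P, ← hL] using hab

section Clique

variable {n : ℕ} {q : QuadraticForm ℚ (Fin n → ℚ)}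

@[simp]
lemma distGraph_adj {x y : Fin n → ℚ} : (distGraph q).Adj x y ↔ q (x - y) = 1 := Iff.rfl

lemma IsUnitSimplex.isNClique {m : ℕ} {w : Fin m → Fin n → ℚ} (hw : IsUnitSimplex q w) :
    (distGraph q).IsNClique (m + 1) (insert 0 (univ.image w)) := by
  have hinj : Function.Injective w := fun i j hij => by
    by_contra hne
    simpa [hij] using hw.2 i j hne
  have hzero : 0 ∉ univ.image w := by
    simp only [mem_image, mem_univ, true_and, not_exists]
    intro i h
    simpa [h] using hw.1 i
  refine ⟨?_, by rw [card_insert_of_notMem hzero, card_image_of_injective _ hinj,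
    card_univ, Fintype.card_fin]⟩
  simp only [Finset.coe_insert, Finset.coe_image, Finset.coe_univ, Set.image_univ,
    SimpleGraph.isClique_insert, Set.mem_range, forall_exists_index, forall_apply_eq_imp_iff]
  refine ⟨fun _ ⟨i, hi⟩ _ ⟨j, hj⟩ hne => ?_, fun i _ => by simpa using hw.1 i⟩
  subst hi hj
  exact hw.2 i j (fun h => hne (congrArg w h))

lemma exists_isUnitSimplex_of_isNClique {m : ℕ} {s : Finset (Fin n → ℚ)}
    (hs : (distGraph q).IsNClique (m + 1) s) : ∃ w : Fin m → Fin n → ℚ, IsUnitSimplex q w := by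
  obtain ⟨x₀, hx₀⟩ := s.card_pos.mp (by rw [hs.card_eq]; omega)
  have hcard : (s.erase x₀).card = m := by rw [card_erase_of_mem hx₀, hs.card_eq]; rfl
  set e := ((s.erase x₀).equivFinOfCardEq hcard).symm
  refine ⟨fun i => (e i : Fin n → ℚ) - x₀, fun i => ?_, fun i j hij => ?_⟩
  · exact hs.isClique (mem_of_mem_erase (e i).2) hx₀ (ne_of_mem_erase (e i).2)
  · rw [sub_sub_sub_cancel_right]
    exact hs.isClique (mem_of_mem_erase (e i).2) (mem_of_mem_erase (e j).2)
      (fun h => hij (e.injective (Subtype.ext h)))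

lemma exists_isNClique_succ_iff {m : ℕ} :
    (∃ s, (distGraph q).IsNClique (m + 1) s) ↔ ∃ w : Fin m → Fin n → ℚ, IsUnitSimplex q w :=
  ⟨fun ⟨_, hs⟩ => exists_isUnitSimplex_of_isNClique hs, fun ⟨_, hw⟩ => ⟨_, hw.isNClique⟩⟩

end Clique

section Embedding

variable {n k : ℕ} {q : QuadraticForm ℚ (Fin n → ℚ)}

lemma SEmbeds.le (h : SEmbeds k q) : k ≤ n := by
  obtain ⟨-, T, -⟩ := h
  have := T.finrank_eq
  simp only [Module.finrank_prod, Module.finrank_fin_fun] at this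
  omega

lemma SEmbeds.exists_isUnitSimplex (h : SEmbeds k q) :
    ∃ w : Fin k → Fin n → ℚ, IsUnitSimplex q w := by
  obtain ⟨_, T, hT⟩ := h
  refine ⟨fun i => T.symm (Pi.single i 1, 0), fun i => ?_, fun i j hij => ?_⟩
  · simp [hT, Sfun_single]
  · simp [hT, ← map_sub, Sfun_single_sub_single hij]

lemma sEmbeds_iff_exists_isUnitSimplex (hq : q.Anisotropic) :
    SEmbeds k q ↔ ∃ w : Fin k → Fin n → ℚ, IsUnitSimplex q w :=
  ⟨SEmbeds.exists_isUnitSimplex, fun ⟨_, hw⟩ =>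
    sEmbeds_of_isometry hq _ hw.map_linearCombination⟩

end Embedding

lemma Nat.sSup_eq_sSup_add_one {A B : Set ℕ} (hAB : ∀ m, m + 1 ∈ A ↔ m ∈ B)
    (hB : B.Nonempty) (hBbdd : BddAbove B) : sSup A = sSup B + 1 := by
  refine IsGreatest.csSup_eq ⟨(hAB _).mpr (Nat.sSup_mem hB hBbdd), fun a ha => ?_⟩
  cases a with
  | zero => omega
  | succ m => exact Nat.succ_le_succ (le_csSup hBbdd ((hAB m).mp ha))

/-- The clique number of `G(ℚⁿ, q)` equals `1 + max {k : Sₖ embeds into q}`. -/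
theorem stmt_9 {n : ℕ} (q : QuadraticForm ℚ (Fin n → ℚ)) (hq : q.PosDef) :
    (distGraph q).cliqueNum = 1 + sSup {k : ℕ | SEmbeds k q} := by
  have hsucc (m : ℕ) : (∃ s, (distGraph q).IsNClique (m + 1) s) ↔ SEmbeds m q :=
    exists_isNClique_succ_iff.trans (sEmbeds_iff_exists_isUnitSimplex hq.anisotropic).symm
  have h0 : SEmbeds 0 q := (hsucc 0).mp ⟨{0}, by simp⟩
  rw [add_comm]
  exact Nat.sSup_eq_sSup_add_one hsucc ⟨0, h0⟩ ⟨n, fun _ hk => SEmbeds.le hk⟩
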